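/- (Theorem 1, second relation.) Let u, p be a smooth solution of the incompressible Euler equations and let ω = curl u. At every point (t,x) where ω ≠ 0, the quaternion identity [0, D²ω/Dt²] + [α_p, χ_p] * [0, ω] = 0 holds, where α_p = ω̂·Pω̂ and χ_p = ω̂×Pω̂ and P is the pressure Hessian; i.e., the vorticity tetrad 𝔴 = [0,ω] satisfies D²𝔴/Dt² + 𝔮_p ⊛ 𝔴 = 0 with 𝔮_p = [α_p, χ_p]. -/

import Mathlib

noncomputable section

open scoped BigOperators

/-- Space-time: a point is a pair (t, x) with t ∈ ℝ, x ∈ ℝ³. -/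
abbrev Pt : Type := ℝ × (Fin 3 → ℝ)

/-- Euclidean dot product on ℝ³. -/
def dot3 (a b : Fin 3 → ℝ) : ℝ := a 0 * b 0 + a 1 * b 1 + a 2 * b 2

/-- Cross product on ℝ³. -/
def cross3 (a b : Fin 3 → ℝ) : Fin 3 → ℝ :=
  ![a 1 * b 2 - a 2 * b 1, a 2 * b 0 - a 0 * b 2, a 0 * b 1 - a 1 * b 0]

/-- Euclidean norm on ℝ³. -/
def norm3 (a : Fin 3 → ℝ) : ℝ := Real.sqrt (dot3 a a)

/-- The quaternion `[s, r]` with scalar part `s` and vector part `r`. -/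
def quat (s : ℝ) (r : Fin 3 → ℝ) : Quaternion ℝ := ⟨s, r 0, r 1, r 2⟩

/-- Material derivative `∂ₜ f + (a·∇)f` of a scalar field `f` along the
velocity field `a`, at the point `z`. -/
def mder (a : Pt → Fin 3 → ℝ) (f : Pt → ℝ) (z : Pt) : ℝ :=
  fderiv ℝ f z ((1 : ℝ), a z)

/-- Spatial partial derivative `∂f/∂xᵢ`. -/
def pd (i : Fin 3) (f : Pt → ℝ) (z : Pt) : ℝ :=
  fderiv ℝ f z ((0 : ℝ), Pi.single i 1)

/-- The vorticity `ω = curl u`. -/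
def vort (u : Pt → Fin 3 → ℝ) (z : Pt) : Fin 3 → ℝ :=
  ![pd 1 (fun q => u q 2) z - pd 2 (fun q => u q 1) z,
    pd 2 (fun q => u q 0) z - pd 0 (fun q => u q 2) z,
    pd 0 (fun q => u q 1) z - pd 1 (fun q => u q 0) z]

/-- The unit vorticity `ω̂ = ω/|ω|`. -/
def vortHat (u : Pt → Fin 3 → ℝ) (z : Pt) : Fin 3 → ℝ :=
  (norm3 (vort u z))⁻¹ • vort u z

/-- The pressure Hessian `P = (∂²p/∂xᵢ∂xⱼ)` applied to a vector `v`. -/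
def hessVec (p : Pt → ℝ) (z : Pt) (v : Fin 3 → ℝ) : Fin 3 → ℝ :=
  fun i => ∑ j : Fin 3, pd i (pd j p) z * v j

/-- `α_p = ω̂·Pω̂`. -/
def alphaP (u : Pt → Fin 3 → ℝ) (p : Pt → ℝ) (z : Pt) : ℝ :=
  dot3 (vortHat u z) (hessVec p z (vortHat u z))

/-- `χ_p = ω̂×Pω̂`. -/
def chiP (u : Pt → Fin 3 → ℝ) (p : Pt → ℝ) (z : Pt) : Fin 3 → ℝ :=
  cross3 (vortHat u z) (hessVec p z (vortHat u z))


def pdv (v : Pt) (f : Pt → ℝ) (z : Pt) : ℝ := fderiv ℝ f z v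

lemma contDiff_pdv {f : Pt → ℝ} (hf : ContDiff ℝ (⊤ : ℕ∞) f) (v : Pt) : ContDiff ℝ (⊤ : ℕ∞) (pdv v f) :=
  (hf.fderiv_right (by simp)).clm_apply contDiff_const

lemma pdv_comm {f : Pt → ℝ} (hf : ContDiff ℝ (⊤ : ℕ∞) f) (v w : Pt) (z : Pt) :
    pdv v (pdv w f) z = pdv w (pdv v f) z := by
  have hd : ContDiff ℝ (⊤ : ℕ∞) (fderiv ℝ f) := hf.fderiv_right (by simp)
  have h1 : ∀ (a : Pt), fderiv ℝ (pdv a f) z = (fderiv ℝ (fderiv ℝ f) z).flip a := by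
    intro a
    have := fderiv_clm_apply (c := fderiv ℝ f) (u := fun _ : Pt => a)
      (hd.differentiable (by simp) z) (differentiableAt_const a)
    rw [show pdv a f = fun y => fderiv ℝ f y a from rfl]
    simpa using this
  have hs := ((hf.contDiffAt (x := z)).isSymmSndFDerivAt (by rw [minSmoothness_of_isRCLikeNormedField]; exact le_trans (le_of_eq (WithTop.coe_ofNat (α := ℕ∞) 2).symm) (WithTop.coe_le_coe.2 le_top))).eq v w
  simp only [pdv, h1]
  simpa using hs


def et : Pt := ((1:ℝ), 0)
def ev (k : Fin 3) : Pt := ((0:ℝ), Pi.single k 1)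

lemma vec_decomp (a : Fin 3 → ℝ) : ((1:ℝ), a) = et + ∑ k : Fin 3, a k • ev k := by
  refine Prod.ext ?_ ?_
  · simp [et, ev, Fin.sum_univ_three]
  · funext x
    simp [et, ev, Fin.sum_univ_three, Pi.single_apply]
    fin_cases x <;> simp

lemma mder_eq (a : Pt → Fin 3 → ℝ) (f : Pt → ℝ) (z : Pt) :
    mder a f z = pdv et f z + ∑ k, a z k * pdv (ev k) f z := by
  rw [mder, vec_decomp (a z), map_add, map_sum]
  simp [pdv, smul_eq_mul]

lemma pdv_mul {f g : Pt → ℝ} (hf : DifferentiableAt ℝ f z) (hg : DifferentiableAt ℝ g z)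
    (v : Pt) : pdv v (fun q => f q * g q) z = pdv v f z * g z + f z * pdv v g z := by
  simp [pdv, fderiv_fun_mul hf hg]; ring

lemma pdv_add {f g : Pt → ℝ} (hf : DifferentiableAt ℝ f z) (hg : DifferentiableAt ℝ g z)
    (v : Pt) : pdv v (fun q => f q + g q) z = pdv v f z + pdv v g z := by
  simp [pdv, fderiv_fun_add hf hg]

lemma pdv_neg {f : Pt → ℝ} (v : Pt) :
    pdv v (fun q => -(f q)) z = - pdv v f z := by
  simp [pdv, fderiv_neg]

lemma mder_mul {a : Pt → Fin 3 → ℝ} {f g : Pt → ℝ} (hf : DifferentiableAt ℝ f z)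
    (hg : DifferentiableAt ℝ g z) :
    mder a (fun q => f q * g q) z = mder a f z * g z + f z * mder a g z := by
  simp [mder, fderiv_fun_mul hf hg]; ring

lemma contDiff_comp_k {u : Pt → Fin 3 → ℝ} (hu : ContDiff ℝ (⊤ : ℕ∞) u) (k : Fin 3) :
    ContDiff ℝ (⊤ : ℕ∞) (fun q => u q k) :=
  (ContinuousLinearMap.proj (R := ℝ) (φ := fun _ : Fin 3 => ℝ) k).contDiff.comp hu

lemma pdv_mder {u : Pt → Fin 3 → ℝ} {f : Pt → ℝ} (hu : ContDiff ℝ (⊤ : ℕ∞) u) (hf : ContDiff ℝ (⊤ : ℕ∞) f)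
    (i : Fin 3) (z : Pt) :
    pdv (ev i) (mder u f) z =
      mder u (pdv (ev i) f) z + ∑ k, pdv (ev i) (fun q => u q k) z * pdv (ev k) f z := by
  have hD : ∀ (g : Pt → ℝ), ContDiff ℝ (⊤ : ℕ∞) g → DifferentiableAt ℝ g z :=
    fun g hg => hg.differentiable (by simp) z
  have hpf : ∀ v, ContDiff ℝ (⊤ : ℕ∞) (pdv v f) := fun v => contDiff_pdv hf v
  have huk : ∀ k, ContDiff ℝ (⊤ : ℕ∞) (fun q => u q k) := contDiff_comp_k hu
  have hexp : mder u f = fun q => pdv et f q +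
      (u q 0 * pdv (ev 0) f q + u q 1 * pdv (ev 1) f q + u q 2 * pdv (ev 2) f q) := by
    funext q; rw [mder_eq]; simp [Fin.sum_univ_three]
  rw [hexp]
  rw [pdv_add (hD _ (hpf et)) (hD _ (((((huk 0).mul (hpf _)).add ((huk 1).mul (hpf _))).add
    ((huk 2).mul (hpf _))))),
    pdv_add (hD _ (((huk 0).mul (hpf _)).add ((huk 1).mul (hpf _)))) (hD _ ((huk 2).mul (hpf _))),
    pdv_add (hD _ ((huk 0).mul (hpf _))) (hD _ ((huk 1).mul (hpf _))),
    pdv_mul (hD _ (huk 0)) (hD _ (hpf _)),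
    pdv_mul (hD _ (huk 1)) (hD _ (hpf _)),
    pdv_mul (hD _ (huk 2)) (hD _ (hpf _)),
    pdv_comm hf (ev i) et, pdv_comm hf (ev i) (ev 0),
    pdv_comm hf (ev i) (ev 1), pdv_comm hf (ev i) (ev 2),
    mder_eq]
  simp only [Fin.sum_univ_three]
  ring

lemma mder_sub {a : Pt → Fin 3 → ℝ} {f g : Pt → ℝ} (hf : DifferentiableAt ℝ f z)
    (hg : DifferentiableAt ℝ g z) :
    mder a (fun q => f q - g q) z = mder a f z - mder a g z := by
  simp [mder, fderiv_fun_sub hf hg]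

lemma mder_add {a : Pt → Fin 3 → ℝ} {f g : Pt → ℝ} (hf : DifferentiableAt ℝ f z)
    (hg : DifferentiableAt ℝ g z) :
    mder a (fun q => f q + g q) z = mder a f z + mder a g z := by
  simp [mder, fderiv_fun_add hf hg]


lemma pd_eq (i : Fin 3) (f : Pt → ℝ) : pd i f = pdv (ev i) f := rfl


section euler
variable (u : Pt → Fin 3 → ℝ) (p : Pt → ℝ)

lemma contDiff_pd {f : Pt → ℝ} (hf : ContDiff ℝ (⊤ : ℕ∞) f) (i : Fin 3) : ContDiff ℝ (⊤ : ℕ∞) (pd i f) := by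
  rw [pd_eq]; exact contDiff_pdv hf _

lemma pd_comm {f : Pt → ℝ} (hf : ContDiff ℝ (⊤ : ℕ∞) f) (i j : Fin 3) (z : Pt) :
    pd i (pd j f) z = pd j (pd i f) z := by
  simp only [pd_eq]; exact pdv_comm hf _ _ z

lemma grad_material (hu : ContDiff ℝ (⊤ : ℕ∞) u) (hp : ContDiff ℝ (⊤ : ℕ∞) p)
    (heuler : ∀ z i, mder u (fun q => u q i) z = - pd i p z) (j i : Fin 3) (z : Pt) :
    mder u (pd j (fun q => u q i)) z =
      - pd j (pd i p) z - ∑ k, pd j (fun q => u q k) z * pd k (fun q => u q i) z := by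
  have h := pdv_mder hu (contDiff_comp_k hu i) j z
  have h2 : mder u (fun q => u q i) = fun q => -(pd i p q) := funext fun q => heuler q i
  rw [h2] at h
  simp only [pd_eq] at *
  rw [pdv_neg] at h
  linarith [h]

lemma contDiff_vortk (hu : ContDiff ℝ (⊤ : ℕ∞) u) (k : Fin 3) :
    ContDiff ℝ (⊤ : ℕ∞) (fun q => vort u q k) := by
  fin_cases k
  · simp only [vort, Matrix.cons_val_zero]
    exact (contDiff_pd (contDiff_comp_k hu 2) 1).sub (contDiff_pd (contDiff_comp_k hu 1) 2)
  · simp only [vort, Matrix.cons_val_one, Matrix.head_cons]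
    exact (contDiff_pd (contDiff_comp_k hu 0) 2).sub (contDiff_pd (contDiff_comp_k hu 2) 0)
  · simp only [vort, Matrix.cons_val_two, Matrix.tail_cons, Matrix.head_cons]
    exact (contDiff_pd (contDiff_comp_k hu 1) 0).sub (contDiff_pd (contDiff_comp_k hu 0) 1)

lemma vort_transport (hu : ContDiff ℝ (⊤ : ℕ∞) u) (hp : ContDiff ℝ (⊤ : ℕ∞) p)
    (heuler : ∀ z i, mder u (fun q => u q i) z = - pd i p z)
    (hdiv : ∀ z, ∑ i : Fin 3, pd i (fun q => u q i) z = 0) (z : Pt) (i : Fin 3) :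
    mder u (fun q => vort u q i) z = ∑ j, vort u z j * pd j (fun q => u q i) z := by
  have hD : ∀ (g : Pt → ℝ), ContDiff ℝ (⊤ : ℕ∞) g → DifferentiableAt ℝ g z :=
    fun g hg => hg.differentiable (by simp) z
  have hdz := hdiv z; rw [Fin.sum_univ_three] at hdz
  fin_cases i
  · show mder u (fun q => vort u q 0) z = ∑ j : Fin 3, vort u z j * pd j (fun q => u q 0) z
    have h0 : (fun q => vort u q 0) =
        fun q => pd 1 (fun r => u r 2) q - pd 2 (fun r => u r 1) q := by
      funext q; simp [vort]
    rw [h0, mder_sub (hD _ (contDiff_pd (contDiff_comp_k hu 2) 1))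
      (hD _ (contDiff_pd (contDiff_comp_k hu 1) 2)),
      grad_material u p hu hp heuler 1 2 z, grad_material u p hu hp heuler 2 1 z]
    simp only [Fin.sum_univ_three, vort, Matrix.cons_val_zero, Matrix.cons_val_one,
      Matrix.head_cons, Matrix.cons_val_two, Matrix.tail_cons]
    linear_combination pd_comm hp 2 1 z +
      (pd 2 (fun q => u q 1) z - pd 1 (fun q => u q 2) z) * hdz
  · show mder u (fun q => vort u q 1) z = ∑ j : Fin 3, vort u z j * pd j (fun q => u q 1) z
    have h0 : (fun q => vort u q 1) =
        fun q => pd 2 (fun r => u r 0) q - pd 0 (fun r => u r 2) q := by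
      funext q; simp [vort]
    rw [h0, mder_sub (hD _ (contDiff_pd (contDiff_comp_k hu 0) 2))
      (hD _ (contDiff_pd (contDiff_comp_k hu 2) 0)),
      grad_material u p hu hp heuler 2 0 z, grad_material u p hu hp heuler 0 2 z]
    simp only [Fin.sum_univ_three, vort, Matrix.cons_val_zero, Matrix.cons_val_one,
      Matrix.head_cons, Matrix.cons_val_two, Matrix.tail_cons]
    linear_combination pd_comm hp 0 2 z +
      (pd 0 (fun q => u q 2) z - pd 2 (fun q => u q 0) z) * hdz
  · show mder u (fun q => vort u q 2) z = ∑ j : Fin 3, vort u z j * pd j (fun q => u q 2) z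
    have h0 : (fun q => vort u q 2) =
        fun q => pd 0 (fun r => u r 1) q - pd 1 (fun r => u r 0) q := by
      funext q; simp [vort]
    rw [h0, mder_sub (hD _ (contDiff_pd (contDiff_comp_k hu 1) 0))
      (hD _ (contDiff_pd (contDiff_comp_k hu 0) 1)),
      grad_material u p hu hp heuler 0 1 z, grad_material u p hu hp heuler 1 0 z]
    simp only [Fin.sum_univ_three, vort, Matrix.cons_val_zero, Matrix.cons_val_one,
      Matrix.head_cons, Matrix.cons_val_two, Matrix.tail_cons]
    linear_combination pd_comm hp 1 0 z +
      (pd 1 (fun q => u q 0) z - pd 0 (fun q => u q 1) z) * hdz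

lemma vort_second (hu : ContDiff ℝ (⊤ : ℕ∞) u) (hp : ContDiff ℝ (⊤ : ℕ∞) p)
    (heuler : ∀ z i, mder u (fun q => u q i) z = - pd i p z)
    (hdiv : ∀ z, ∑ i : Fin 3, pd i (fun q => u q i) z = 0) (z : Pt) (i : Fin 3) :
    mder u (fun q => mder u (fun r => vort u r i) q) z
      = - ∑ j, pd j (pd i p) z * vort u z j := by
  have hD : ∀ (g : Pt → ℝ), ContDiff ℝ (⊤ : ℕ∞) g → DifferentiableAt ℝ g z :=
    fun g hg => hg.differentiable (by simp) z
  have hexp : (fun q => mder u (fun r => vort u r i) q) =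
      fun q => vort u q 0 * pd 0 (fun r => u r i) q +
        vort u q 1 * pd 1 (fun r => u r i) q + vort u q 2 * pd 2 (fun r => u r i) q := by
    funext q; rw [vort_transport u p hu hp heuler hdiv q i, Fin.sum_univ_three]
  rw [hexp]
  have d1 : ∀ k, DifferentiableAt ℝ (fun q => vort u q k) z :=
    fun k => hD _ (contDiff_vortk u hu k)
  have d2 : ∀ k, DifferentiableAt ℝ (pd k (fun r => u r i)) z :=
    fun k => hD _ (contDiff_pd (contDiff_comp_k hu i) k)
  rw [mder_add (((d1 0).fun_mul (d2 0)).fun_add ((d1 1).fun_mul (d2 1))) ((d1 2).fun_mul (d2 2)),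
      mder_add ((d1 0).fun_mul (d2 0)) ((d1 1).fun_mul (d2 1)),
      mder_mul (d1 0) (d2 0), mder_mul (d1 1) (d2 1), mder_mul (d1 2) (d2 2),
      vort_transport u p hu hp heuler hdiv z 0, vort_transport u p hu hp heuler hdiv z 1,
      vort_transport u p hu hp heuler hdiv z 2,
      grad_material u p hu hp heuler 0 i z, grad_material u p hu hp heuler 1 i z,
      grad_material u p hu hp heuler 2 i z]
  simp only [Fin.sum_univ_three]
  ring

end euler

lemma norm3_key {w : Fin 3 → ℝ} (hw : w ≠ 0) :
    (norm3 w)⁻¹ * (norm3 w)⁻¹ * (w 0 * w 0 + w 1 * w 1 + w 2 * w 2) = 1 := by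
  have h1 : dot3 w w = w 0 * w 0 + w 1 * w 1 + w 2 * w 2 := rfl
  have hpos : 0 < dot3 w w := by
    rw [h1]
    rcases Function.ne_iff.1 hw with ⟨i, hi⟩
    fin_cases i <;> [(have : w 0 ≠ 0 := hi); (have : w 1 ≠ 0 := hi); (have : w 2 ≠ 0 := hi)] <;>
      nlinarith [mul_self_nonneg (w 0), mul_self_nonneg (w 1), mul_self_nonneg (w 2), mul_self_pos.2 this]
  have hs : norm3 w * norm3 w = dot3 w w := Real.mul_self_sqrt hpos.le
  have hn : norm3 w ≠ 0 := by
    rw [norm3]; positivity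
  rw [← h1, ← hs]
  field_simp

/-- Theorem 1, second relation: for a smooth Euler solution, at
every point where `ω ≠ 0`, `[0, D²ω/Dt²] + [α_p, χ_p] * [0, ω] = 0`. -/
theorem vorticity_tetrad_second_order
    (u : Pt → Fin 3 → ℝ) (p : Pt → ℝ)
    (hu : ContDiff ℝ (⊤ : ℕ∞) u) (hp : ContDiff ℝ (⊤ : ℕ∞) p)
    (heuler : ∀ z i, mder u (fun q => u q i) z = - pd i p z)
    (hdiv : ∀ z, ∑ i : Fin 3, pd i (fun q => u q i) z = 0)
    (z : Pt) (hω : vort u z ≠ 0) :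
    quat 0 (fun i => mder u (fun q => mder u (fun r => vort u r i) q) z) +
      quat (alphaP u p z) (chiP u p z) * quat 0 (vort u z) = 0 := by
  have hd2 : ∀ i : Fin 3, mder u (fun q => mder u (fun r => vort u r i) q) z
      = -(pd i (pd 0 p) z * vort u z 0 + pd i (pd 1 p) z * vort u z 1
          + pd i (pd 2 p) z * vort u z 2) := by
    intro i
    rw [vort_second u p hu hp heuler hdiv z i, Fin.sum_univ_three,
        pd_comm hp 0 i z, pd_comm hp 1 i z, pd_comm hp 2 i z]
  have key := norm3_key hω
  simp only [Quaternion.ext_iff, Quaternion.re_add, Quaternion.re_mul,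
    Quaternion.imI_add, Quaternion.imI_mul, Quaternion.imJ_add, Quaternion.imJ_mul,
    Quaternion.imK_add, Quaternion.imK_mul, Quaternion.re_zero, Quaternion.imI_zero,
    Quaternion.imJ_zero, Quaternion.imK_zero]
  refine ⟨?_, ?_, ?_, ?_⟩ <;>
    simp only [quat, hd2 0, hd2 1, hd2 2, alphaP, chiP, vortHat, hessVec, dot3, cross3,
      Fin.sum_univ_three, Pi.smul_apply, smul_eq_mul, Matrix.cons_val_zero,
      Matrix.cons_val_one, Matrix.head_cons, Matrix.cons_val_two, Matrix.tail_cons]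
  · ring
  · linear_combination (pd 0 (pd 0 p) z * vort u z 0 + pd 0 (pd 1 p) z * vort u z 1
      + pd 0 (pd 2 p) z * vort u z 2) * key
  · linear_combination (pd 1 (pd 0 p) z * vort u z 0 + pd 1 (pd 1 p) z * vort u z 1
      + pd 1 (pd 2 p) z * vort u z 2) * key
  · linear_combination (pd 2 (pd 0 p) z * vort u z 0 + pd 2 (pd 1 p) z * vort u z 1
      + pd 2 (pd 2 p) z * vort u z 2) * key
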